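/- arXiv:0810.5717 — 2 statements merged into one kernel-verified Lean document; each statement's English description precedes it below -/
import Mathlib

section
/- A real-valued function F on subsets of a finite set S a-satisfies a CI statement (A ⊥ B | C), i.e., F(C) + F(A∪B∪C) = F(A∪C) + F(B∪C), if and only if Σ_{U ∈ L(A,B|C)} ΔF(U) = 0. -/
/-!
Möbius inversion on the Boolean lattice recovers `F` from its density: `F X = ∑_{U ⊇ X} ΔF U`.
Substituting this for the four values of `F`, the coefficient of `ΔF U` in
`F C + F (A ∪ B ∪ C) - F (A ∪ C) - F (B ∪ C)` is
`[C ⊆ U] + [A ∪ B ∪ C ⊆ U] - [A ∪ C ⊆ U] - [B ∪ C ⊆ U]`, which is the indicator of `L(A,B|C)`.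
-/

open Finset

section

variable {α : Type*} [DecidableEq α]

theorem sum_Icc_neg_one_pow_card_sub {R : Type*} [Ring R] {s t : Finset α} (hst : s ⊆ t) :
    ∑ u ∈ Icc s t, (-1 : R) ^ (#t - #u) = if s = t then 1 else 0 := by
  have hcompl : ∑ u ∈ Icc s t, (-1 : R) ^ (#t - #u) = ∑ w ∈ (t \ s).powerset, (-1 : R) ^ #w := by
    refine sum_nbij' (t \ ·) (t \ ·) ?_ ?_ ?_ ?_ ?_ <;> simp only [mem_Icc, mem_powerset]
    · exact fun u hu => sdiff_subset_sdiff le_rfl hu.1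
    · exact fun w hw =>
        ⟨subset_sdiff.2 ⟨hst, disjoint_of_subset_right hw disjoint_sdiff⟩, sdiff_subset⟩
    · exact fun u hu => Finset.sdiff_sdiff_eq_self hu.2
    · exact fun w hw => Finset.sdiff_sdiff_eq_self (hw.trans sdiff_subset)
    · exact fun u hu => by rw [card_sdiff_of_subset hu.2]
  have hempty : t \ s = ∅ ↔ s = t :=
    sdiff_eq_empty_iff_subset.trans ⟨hst.antisymm, fun h => h ▸ subset_rfl⟩
  have hsum := congrArg (Int.cast : ℤ → R) (sum_powerset_neg_one_pow_card (x := t \ s))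
  push_cast [hempty] at hsum
  rw [hcompl, hsum]

variable [Fintype α]

theorem sum_Ici_eq_of_eq_sum_Ici_neg_one_pow {R : Type*} [Ring R] {F G : Finset α → R}
    (hG : ∀ X, G X = ∑ U ∈ Ici X, (-1) ^ (#U - #X) * F U) (X : Finset α) :
    ∑ U ∈ Ici X, G U = F X := by
  calc ∑ U ∈ Ici X, G U
      = ∑ U ∈ Ici X, ∑ V ∈ Ici U, (-1 : R) ^ (#V - #U) * F V := sum_congr rfl fun U _ => hG U
    _ = ∑ V ∈ Ici X, ∑ U ∈ Icc X V, (-1 : R) ^ (#V - #U) * F V :=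
        sum_comm' fun U V => by
          simp only [mem_Ici, mem_Icc]
          exact ⟨fun h => ⟨h, h.1.trans h.2⟩, fun h => h.1⟩
    _ = ∑ V ∈ Ici X, if X = V then F V else 0 := sum_congr rfl fun V hV => by
        rw [← sum_mul, sum_Icc_neg_one_pow_card_sub (mem_Ici.1 hV), ite_mul, one_mul, zero_mul]
    _ = F X := by simp

theorem sum_filter_not_subset_not_subset {M : Type*} [AddCommGroup M] (A B C : Finset α)
    (f : Finset α → M) :
    ∑ U with C ⊆ U ∧ ¬A ⊆ U ∧ ¬B ⊆ U, f U =
      ∑ U ∈ Ici C, f U + ∑ U ∈ Ici (A ∪ B ∪ C), f U -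
        (∑ U ∈ Ici (A ∪ C), f U + ∑ U ∈ Ici (B ∪ C), f U) := by
  simp only [← filter_le_eq_Ici, sum_filter, ← sum_add_distrib, ← sum_sub_distrib]
  refine sum_congr rfl fun U _ => ?_
  by_cases hC : C ⊆ U <;> by_cases hA : A ⊆ U <;> by_cases hB : B ⊆ U <;>
    simp [hC, hA, hB, union_subset_iff]

end

theorem asat_iff_density_sum_zero_general {α : Type*} [Fintype α] [DecidableEq α]
    (A B C : Finset α)
    (F ΔF : Finset α → ℝ)
    (hΔ : ∀ X : Finset α,
      ΔF X = ∑ U ∈ Finset.univ.powerset.filter (fun U => X ⊆ U),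
        (-1 : ℝ) ^ (U.card - X.card) * F U) :
    (F C + F (A ∪ B ∪ C) = F (A ∪ C) + F (B ∪ C)) ↔
      ∑ U ∈ Finset.univ.powerset.filter
        (fun U => C ⊆ U ∧ ¬ A ⊆ U ∧ ¬ B ⊆ U), ΔF U = 0 := by
  have hΔIci : ∀ X, ΔF X = ∑ U ∈ Ici X, (-1) ^ (#U - #X) * F U := fun X => by
    rw [hΔ, powerset_univ, filter_le_eq_Ici]
  have hF := sum_Ici_eq_of_eq_sum_Ici_neg_one_pow hΔIci
  rw [powerset_univ, sum_filter_not_subset_not_subset, hF, hF, hF, hF, sub_eq_zero]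

/-- F a-satisfies (A ⊥ B | C) iff the densities sum to zero over the semi-lattice
L(A,B|C) = {U : C ⊆ U, ¬(A ⊆ U), ¬(B ⊆ U)}. -/
theorem asat_iff_density_sum_zero {α : Type*} [Fintype α] [DecidableEq α]
    (A B C : Finset α) (hAB : Disjoint A B) (hAC : Disjoint A C) (hBC : Disjoint B C)
    (F ΔF : Finset α → ℝ)
    (hΔ : ∀ X : Finset α,
      ΔF X = ∑ U ∈ Finset.univ.powerset.filter (fun U => X ⊆ U),
        (-1 : ℝ) ^ (U.card - X.card) * F U) :
    (F C + F (A ∪ B ∪ C) = F (A ∪ C) + F (B ∪ C)) ↔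
      ∑ U ∈ Finset.univ.powerset.filter
        (fun U => C ⊆ U ∧ ¬ A ⊆ U ∧ ¬ B ⊆ U), ΔF U = 0 :=
  asat_iff_density_sum_zero_general A B C F ΔF hΔ
end

section
/- Soundness of strong contraction for semi-lattice inclusion: for pairwise disjoint subsets and well-formed CI statements, L(D,E|C) ⊆ L(A,B|C) ∪ L(D,E|A∪C) ∪ L(D,E|B∪C). -/
open Finset

def ciLattice {α : Type*} [Fintype α] [DecidableEq α] (A B C : Finset α) :
    Set (Finset α) :=
  {U | C ⊆ U ∧ ¬ A ⊆ U ∧ ¬ B ⊆ U}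

theorem ciLattice_union_left_of_subset {α : Type*} [Fintype α] [DecidableEq α]
    {D E C X U : Finset α} (hU : U ∈ ciLattice D E C) (hX : X ⊆ U) :
    U ∈ ciLattice D E (X ∪ C) :=
  ⟨union_subset hX hU.1, hU.2⟩

theorem strongContraction_lattice_sound_general {α : Type*} [Fintype α] [DecidableEq α]
    (A B C D E : Finset α) :
    ciLattice D E C ⊆
      ciLattice A B C ∪ ciLattice D E (A ∪ C) ∪ ciLattice D E (B ∪ C) := by
  intro U hU
  by_cases hA : A ⊆ U
  · exact Or.inl (Or.inr (ciLattice_union_left_of_subset hU hA))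
  by_cases hB : B ⊆ U
  · exact Or.inr (ciLattice_union_left_of_subset hU hB)
  · exact Or.inl (Or.inl ⟨hU.1, hA, hB⟩)

/-- Soundness of strong contraction for semi-lattice inclusion. -/
theorem strongContraction_lattice_sound {α : Type*} [Fintype α] [DecidableEq α]
    (A B C D E : Finset α)
    (hAB : Disjoint A B) (hAC : Disjoint A C) (hBC : Disjoint B C)
    (hDE : Disjoint D E) (hDAC : Disjoint D (A ∪ C)) (hEAC : Disjoint E (A ∪ C))
    (hDBC : Disjoint D (B ∪ C)) (hEBC : Disjoint E (B ∪ C)) :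
    ciLattice D E C ⊆
      ciLattice A B C ∪ ciLattice D E (A ∪ C) ∪ ciLattice D E (B ∪ C) :=
  strongContraction_lattice_sound_general A B C D E
end
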